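/- Let N ≥ 4 and w ∈ W_N. Applying the 'spike-the-maximum' operation (apply π^{a,*} with a the index of the maximal coordinate) 2⌈N^{1/2}⌉ times in succession starting from w yields a ladder list, i.e. an element of L_N. -/
import Mathlib


/-- The spike map: neuron `a` spikes, its potential resets to `0`,
all other potentials increase by one. -/
def spike {N : ℕ} (a : Fin N) (u : Fin N → ℕ) : Fin N → ℕ :=
  fun b => if b = a then 0 else u b + 1

/-- The neuron achieving the maximal membrane potential, ties broken by
smallest index. -/
noncomputable def argmaxIdx {N : ℕ} [NeZero N] (u : Fin N → ℕ) : Fin N :=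
  (Finset.univ.filter (fun a => ∀ b, u b ≤ u a)).min' (by
    obtain ⟨a, -, ha⟩ := Finset.exists_max_image Finset.univ u Finset.univ_nonempty
    exact ⟨a, by simpa using fun b => ha b (Finset.mem_univ b)⟩)

/-- Spike the neuron with the greatest membrane potential. -/
noncomputable def spikeMax {N : ℕ} [NeZero N] (u : Fin N → ℕ) : Fin N → ℕ :=
  spike (argmaxIdx u) u

lemma argmaxIdx_spec {N : ℕ} [NeZero N] (u : Fin N → ℕ) (b : Fin N) :
    u b ≤ u (argmaxIdx u) := by
  have h : argmaxIdx u ∈ Finset.univ.filter (fun a => ∀ b, u b ≤ u a) :=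
    Finset.min'_mem _ _
  simp only [Finset.mem_filter] at h
  exact h.2 b

lemma spikeMax_injective {N : ℕ} [NeZero N] (u : Fin N → ℕ)
    (hu : Function.Injective u) : Function.Injective (spikeMax u) := by
  intro b c h
  simp only [spikeMax, spike] at h
  by_cases hb : b = argmaxIdx u <;> by_cases hc : c = argmaxIdx u
  · rw [hb, hc]
  · simp [hb, hc] at h
  · simp [hb, hc] at h
  · simp only [if_neg hb, if_neg hc, add_left_inj] at h
    exact hu h

/-- The maximal value is at least `N - 1` when `u` is injective. -/
lemma maxval_ge {N : ℕ} [NeZero N] (u : Fin N → ℕ) (hu : Function.Injective u) :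
    N - 1 ≤ u (argmaxIdx u) := by
  set M := u (argmaxIdx u) with hM
  have hsub : Finset.univ.image u ⊆ Finset.range (M + 1) := by
    intro x hx
    simp only [Finset.mem_image] at hx
    obtain ⟨b, -, rfl⟩ := hx
    simpa [Nat.lt_succ_iff] using argmaxIdx_spec u b
  have hcard : (Finset.univ.image u).card = N := by
    rw [Finset.card_image_of_injective _ hu, Finset.card_univ, Fintype.card_fin]
  have := Finset.card_le_card hsub
  rw [hcard, Finset.card_range] at this
  omega

lemma step_mem {N : ℕ} [NeZero N] (u : Fin N → ℕ) (hu : Function.Injective u)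
    (m : ℕ) (hm : ∀ k ≤ m, k ∈ Set.range u) :
    ∀ k ≤ min (m + 1) (N - 1), k ∈ Set.range (spikeMax u) := by
  intro k hk
  rcases Nat.eq_zero_or_pos k with rfl | hkpos
  · exact ⟨argmaxIdx u, by simp [spikeMax, spike]⟩
  · obtain ⟨j, rfl⟩ := Nat.exists_eq_succ_of_ne_zero hkpos.ne'
    obtain ⟨b, hb⟩ := hm j (by omega)
    have hbne : b ≠ argmaxIdx u := by
      intro h
      have := maxval_ge u hu
      rw [← h, hb] at this
      omega
    exact ⟨b, by simp [spikeMax, spike, hbne, hb]⟩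

lemma iterate_invariant {N : ℕ} [NeZero N] (w : Fin N → ℕ)
    (hw : Function.Injective w) (m : ℕ) (hm : ∀ k ≤ m, k ∈ Set.range w)
    (hmN : m ≤ N - 1) :
    ∀ j, Function.Injective (spikeMax^[j] w) ∧
      ∀ k ≤ min (m + j) (N - 1), k ∈ Set.range (spikeMax^[j] w) := by
  intro j
  induction j with
  | zero =>
    refine ⟨hw, fun k hk => hm k ?_⟩
    omega
  | succ j ih =>
    rw [Function.iterate_succ_apply']
    refine ⟨spikeMax_injective _ ih.1, ?_⟩
    intro k hk
    refine step_mem _ ih.1 (min (m + j) (N - 1)) ih.2 k ?_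
    omega

/-- Starting from a configuration `w ∈ W_N`, spiking the neuron with maximal
potential `2⌈√N⌉` times in succession yields a ladder list. -/
theorem spikeMax_iterate_ladder_of_W {N : ℕ} [NeZero N] (hN : 4 ≤ N)
    (w : Fin N → ℕ) (hS : ∃ a, w a = 0)
    (hW1 : ∀ k : ℕ, 1 ≤ k → k ≤ N - Nat.sqrt N → k ∈ Set.range w)
    (hW2 : Function.Injective w) :
    Set.range (spikeMax^[2 * ⌈Real.sqrt N⌉₊] w) = Set.Iio N := by
  set s := Nat.sqrt N with hs
  have hs1 : 1 ≤ s := by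
    have : 1 * 1 ≤ N := by omega
    exact Nat.le_sqrt.mpr (by omega)
  have hsN : s ≤ N := Nat.sqrt_le_self N
  have hm0 : ∀ k ≤ N - s, k ∈ Set.range w := by
    intro k hk
    rcases Nat.eq_zero_or_pos k with rfl | hkpos
    · obtain ⟨a, ha⟩ := hS; exact ⟨a, ha⟩
    · exact hW1 k hkpos hk
  have hceil : s ≤ ⌈Real.sqrt N⌉₊ := by
    have h1 : (s : ℝ) ≤ Real.sqrt N := Real.nat_sqrt_le_real_sqrt
    calc s = ⌈(s : ℝ)⌉₊ := (Nat.ceil_natCast s).symm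
    _ ≤ ⌈Real.sqrt N⌉₊ := Nat.ceil_mono h1
  set j := 2 * ⌈Real.sqrt N⌉₊ with hj
  obtain ⟨hinj, hmem⟩ := iterate_invariant w hW2 (N - s) hm0 (by omega) j
  have hfinal : ∀ k ≤ N - 1, k ∈ Set.range (spikeMax^[j] w) := by
    intro k hk
    exact hmem k (by omega)
  set u := spikeMax^[j] w
  have hsub : Finset.range N ⊆ Finset.univ.image u := by
    intro k hk
    simp only [Finset.mem_range] at hk
    obtain ⟨b, hb⟩ := hfinal k (by omega)
    exact Finset.mem_image.mpr ⟨b, Finset.mem_univ b, hb⟩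
  have hcard : (Finset.univ.image u).card = N := by
    rw [Finset.card_image_of_injective _ hinj, Finset.card_univ, Fintype.card_fin]
  have heq : Finset.range N = Finset.univ.image u :=
    Finset.eq_of_subset_of_card_le hsub (by rw [hcard, Finset.card_range])
  have : (↑(Finset.univ.image u) : Set ℕ) = ↑(Finset.range N) := by rw [heq]
  rw [Finset.coe_image, Finset.coe_univ, Set.image_univ, Finset.coe_range] at this
  exact this
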